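/- arXiv:2211.07001 — 3 statements merged into one kernel-verified Lean document; each statement's English description precedes it below -/
import Mathlib

section
/- Let G be a finite simple graph and let k, ℓ be natural numbers. Suppose x : V(G) → ℝ is a fractional vertex cover of G (i.e., 0 ≤ x_v ≤ 1 for all vertices v, and x_u + x_v ≥ 1 for every edge uv) whose total value Σ_v x_v is minimum among all fractional vertex covers of G. If Σ_v x_v > k + ℓ, then there is no vertex set S with |S| ≤ k such that G − S has at most ℓ edges. -/
/-!
Deleting `S` and then one endpoint of each of the at most `ℓ` remaining edges leaves no edges,
so these at most `k + ℓ` vertices form a vertex cover of `G`. Its indicator function is a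
fractional vertex cover of value at most `k + ℓ`, contradicting the minimality of `x`.
-/

/-- The graph obtained from `G` by deleting the vertices in `S`. -/
def SimpleGraph.delVerts {V : Type*} (G : SimpleGraph V) (S : Set V) : SimpleGraph V where
  Adj a b := G.Adj a b ∧ a ∉ S ∧ b ∉ S
  symm := ⟨fun _ _ h => ⟨h.1.symm, h.2.2, h.2.1⟩⟩
  loopless := ⟨fun a h => G.loopless.irrefl a h.1⟩

theorem Set.sum_indicator_one_eq_ncard {V : Type*} [Fintype V] (C : Set V) :
    ∑ v, C.indicator (1 : V → ℝ) v = C.ncard := by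
  classical
  simp [Set.indicator_apply, Finset.sum_boole, Set.ncard_eq_toFinset_card']

namespace SimpleGraph

variable {V : Type*} {G : SimpleGraph V}

variable (G) in
def IsFractionalVertexCover (y : V → ℝ) : Prop :=
  (∀ v, 0 ≤ y v) ∧ (∀ v, y v ≤ 1) ∧ ∀ ⦃u v⦄, G.Adj u v → 1 ≤ y u + y v

theorem IsVertexCover.union_of_delVerts {S T : Set V} (hT : (G.delVerts S).IsVertexCover T) :
    G.IsVertexCover (S ∪ T) := by
  intro u v huv
  by_cases hu : u ∈ S
  · exact .inl (.inl hu)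
  by_cases hv : v ∈ S
  · exact .inr (.inl hv)
  exact (hT ⟨huv, hu, hv⟩).imp .inr .inr

variable (G) in
theorem exists_isVertexCover_encard_le_add (S : Set V) :
    ∃ C, G.IsVertexCover C ∧ C.encard ≤ S.encard + (G.delVerts S).edgeSet.encard := by
  obtain ⟨T, hT_card, hT⟩ := vertexCoverNum_exists (G.delVerts S)
  refine ⟨S ∪ T, hT.union_of_delVerts, ?_⟩
  calc (S ∪ T).encard ≤ S.encard + T.encard := Set.encard_union_le S T
    _ ≤ S.encard + (G.delVerts S).edgeSet.encard := by
      grw [hT_card, vertexCoverNum_le_encard_edgeSet]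

theorem IsVertexCover.isFractionalVertexCover_indicator {C : Set V} (hC : G.IsVertexCover C) :
    G.IsFractionalVertexCover (C.indicator 1) := by
  have hnonneg : ∀ v, 0 ≤ C.indicator (1 : V → ℝ) v :=
    Set.indicator_nonneg fun _ _ => zero_le_one
  refine ⟨hnonneg, Set.indicator_le_self' fun _ _ => zero_le_one, fun u v huv => ?_⟩
  rcases hC huv with hu | hv
  · rw [Set.indicator_of_mem hu, Pi.one_apply]
    linarith [hnonneg v]
  · rw [Set.indicator_of_mem hv, Pi.one_apply]
    linarith [hnonneg u]

variable (G) in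
theorem exists_isFractionalVertexCover_sum_le [Fintype V] (S : Set V) :
    ∃ y, G.IsFractionalVertexCover y ∧
      ∑ v, y v ≤ S.ncard + (G.delVerts S).edgeSet.ncard := by
  obtain ⟨C, hC, hC_card⟩ := G.exists_isVertexCover_encard_le_add S
  refine ⟨C.indicator 1, hC.isFractionalVertexCover_indicator, ?_⟩
  rw [Set.sum_indicator_one_eq_ncard]
  simp only [← Set.coe_ncard_eq_encard] at hC_card
  exact_mod_cast hC_card

end SimpleGraph

theorem no_solution_of_fractionalVertexCover_gt_general {V : Type*} [Fintype V]
    (G : SimpleGraph V) (k ℓ : ℕ) (x : V → ℝ)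
    (hmin : ∀ y : V → ℝ, (∀ v, 0 ≤ y v) → (∀ v, y v ≤ 1) →
      (∀ ⦃u v : V⦄, G.Adj u v → 1 ≤ y u + y v) → ∑ v, x v ≤ ∑ v, y v)
    (hgt : (k : ℝ) + ℓ < ∑ v, x v) :
    ¬ ∃ S : Finset V, S.card ≤ k ∧ (G.delVerts ↑S).edgeSet.ncard ≤ ℓ := by
  rintro ⟨S, hSk, hEℓ⟩
  obtain ⟨y, ⟨hy0, hy1, hycov⟩, hy_sum⟩ := G.exists_isFractionalVertexCover_sum_le S
  have hS : ((S : Set V).ncard : ℝ) ≤ k := by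
    exact_mod_cast (Set.ncard_coe_finset S).le.trans hSk
  have hE : ((G.delVerts S).edgeSet.ncard : ℝ) ≤ ℓ := by exact_mod_cast hEℓ
  linarith [hmin y hy0 hy1 hycov]

/-- If `x` is a minimum fractional vertex cover of `G` of total value greater than `k + ℓ`,
then there is no vertex set `S` with `|S| ≤ k` such that `G - S` has at most `ℓ` edges. -/
theorem no_solution_of_fractionalVertexCover_gt {V : Type*} [Fintype V] [DecidableEq V]
    (G : SimpleGraph V) (k ℓ : ℕ) (x : V → ℝ)
    (hx0 : ∀ v, 0 ≤ x v) (hx1 : ∀ v, x v ≤ 1)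
    (hxcov : ∀ ⦃u v : V⦄, G.Adj u v → 1 ≤ x u + x v)
    (hmin : ∀ y : V → ℝ, (∀ v, 0 ≤ y v) → (∀ v, y v ≤ 1) →
      (∀ ⦃u v : V⦄, G.Adj u v → 1 ≤ y u + y v) → ∑ v, x v ≤ ∑ v, y v)
    (hgt : (k : ℝ) + ℓ < ∑ v, x v) :
    ¬ ∃ S : Finset V, S.card ≤ k ∧ (G.delVerts ↑S).edgeSet.ncard ≤ ℓ :=
  no_solution_of_fractionalVertexCover_gt_general G k ℓ x hmin hgt
end

section
/- Let G be a finite simple graph, let k, ℓ be natural numbers, and let X, Y be disjoint vertex sets of G such that every neighbor of a vertex of Y lies in X (N(Y) ⊆ X), and suppose there is an (ℓ+1)-expansion M of X into Y in the bipartite subgraph of G between X and Y. Then G has a vertex set S with |S| ≤ k such that G − S has at most ℓ edges if and only if the graph G − (X ∪ Y) has a vertex set S′ with |S′| ≤ k − |X| such that (G − (X ∪ Y)) − S′ has at most ℓ edges. -/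
/-!
Any vertex `x ∈ X` that survives in `G - S` carries `ℓ + 1` expansion edges into `Y`, with
pairwise distinct endpoints in `Y`; each of them either ends in `S ∩ Y` or survives in `G - S`.
So if `G - S` has at most `ℓ` edges, then `(ℓ + 1) |X \ S| ≤ |S ∩ Y| + ℓ`, i.e.
`|X \ S| ≤ |S ∩ Y|`: trading `S ∩ Y` for `X \ S` costs nothing, and `S \ (X ∪ Y)` is a
solution of `G - (X ∪ Y)` of size at most `|S| - |X|`. Conversely, since `N(Y) ⊆ X`, deleting
`X` isolates `Y`, so `X ∪ S'` is a solution for `G` whenever `S'` is one for `G - (X ∪ Y)`.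
-/

open Finset

namespace SimpleGraph

variable {V : Type*} (G : SimpleGraph V)

theorem delVerts_delVerts (S T : Set V) : (G.delVerts S).delVerts T = G.delVerts (S ∪ T) := by
  ext a b
  simp only [delVerts, Set.mem_union]
  tauto

theorem delVerts_anti {S T : Set V} (h : S ⊆ T) : G.delVerts T ≤ G.delVerts S :=
  fun _ _ hab => ⟨hab.1, fun ha => hab.2.1 (h ha), fun hb => hab.2.2 (h hb)⟩

theorem delVerts_union_eq_of_adj_mem {S Y : Set V} (hY : ∀ y ∈ Y, ∀ v, G.Adj y v → v ∈ S) :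
    G.delVerts (S ∪ Y) = G.delVerts S := by
  refine le_antisymm (G.delVerts_anti Set.subset_union_left) ?_
  rintro a b ⟨hab, haS, hbS⟩
  exact ⟨hab, by simp only [Set.mem_union, not_or]; exact ⟨haS, fun ha => hbS (hY a ha b hab)⟩,
    by simp only [Set.mem_union, not_or]; exact ⟨hbS, fun hb => haS (hY b hb a hab.symm)⟩⟩

theorem ncard_edgeSet_mono [Finite V] {H H' : SimpleGraph V} (h : H ≤ H') :
    H.edgeSet.ncard ≤ H'.edgeSet.ncard :=
  Set.ncard_le_ncard (edgeSet_mono h) (Set.toFinite _)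

/-- An edge `{x, y}` of the expansion, `x ∈ X`, `y ∈ Y`, is recorded as the pair `(x, y)`. -/
structure IsExpansion [DecidableEq V] (q : ℕ) (X Y : Finset V) (M : Finset (V × V)) : Prop where
  mem : ∀ p ∈ M, p.1 ∈ X ∧ p.2 ∈ Y ∧ G.Adj p.1 p.2
  card_fst : ∀ x ∈ X, (M.filter (fun p => p.1 = x)).card = q
  card_snd_le : ∀ y ∈ Y, (M.filter (fun p => p.2 = y)).card ≤ 1

namespace IsExpansion

variable {G} [DecidableEq V] {q : ℕ} {X Y : Finset V} {M : Finset (V × V)}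

theorem injOn_snd (hM : G.IsExpansion q X Y M) : Set.InjOn Prod.snd (M : Set (V × V)) := by
  intro p hp p' hp' h
  exact Finset.card_le_one.mp (hM.card_snd_le p.2 (hM.mem p hp).2.1) p (mem_filter.mpr ⟨hp, rfl⟩)
    p' (mem_filter.mpr ⟨hp', h.symm⟩)

theorem injOn_sym2 (hM : G.IsExpansion q X Y M) (hXY : Disjoint X Y) :
    Set.InjOn (fun p : V × V => s(p.1, p.2)) M := by
  intro p hp p' hp' h
  rcases Sym2.mk_eq_mk_iff.mp h with h | h
  · exact h
  · have : p.1 = p'.2 := congrArg Prod.fst h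
    exact absurd (this ▸ (hM.mem p' hp').2.1) (Finset.disjoint_left.mp hXY (hM.mem p hp).1)

theorem card_filter_fst_mem (hM : G.IsExpansion q X Y M) {A : Finset V}
    (hA : A ⊆ X) : (M.filter (fun p => p.1 ∈ A)).card = A.card * q := by
  rw [card_eq_sum_card_fiberwise (s := M.filter (fun p => p.1 ∈ A)) (f := Prod.fst) (t := A)
      fun p hp => (mem_filter.mp hp).2,
    ← smul_eq_mul, ← sum_const]
  refine sum_congr rfl fun x hx => ?_
  rw [filter_filter, ← hM.card_fst x (hA hx)]
  congr 1
  exact filter_congr fun p _ => ⟨And.right, fun h => ⟨h ▸ hx, h⟩⟩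

theorem card_sdiff_mul_le [Fintype V] (hM : G.IsExpansion q X Y M)
    (hXY : Disjoint X Y) (S : Finset V) :
    (X \ S).card * q ≤ (S ∩ Y).card + (G.delVerts S).edgeSet.ncard := by
  set B := M.filter (fun p => p.1 ∈ X \ S)
  have hB : ∀ p ∈ B, p ∈ M ∧ p.1 ∉ S := fun p hp =>
    ⟨(mem_filter.mp hp).1, (mem_sdiff.mp (mem_filter.mp hp).2).2⟩
  have hhit : (B.filter (fun p => p.2 ∈ S)).card ≤ (S ∩ Y).card := by
    refine card_le_card_of_injOn Prod.snd (fun p hp => ?_) ?_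
    · obtain ⟨hpB, hpS⟩ := mem_filter.mp hp
      exact mem_inter.mpr ⟨hpS, (hM.mem p (hB p hpB).1).2.1⟩
    · exact hM.injOn_snd.mono fun p hp => (hB p (mem_filter.mp hp).1).1
  have hmiss : (B.filter (fun p => p.2 ∉ S)).card ≤ (G.delVerts S).edgeSet.ncard := by
    rw [← Set.ncard_coe_finset]
    refine Set.ncard_le_ncard_of_injOn (fun p : V × V => s(p.1, p.2)) (fun p hp => ?_) ?_
      (Set.toFinite _)
    · obtain ⟨hpB, hpS⟩ := mem_filter.mp hp
      exact ⟨(hM.mem p (hB p hpB).1).2.2, (hB p hpB).2, hpS⟩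
    · exact (hM.injOn_sym2 hXY).mono fun p hp => (hB p (mem_filter.mp hp).1).1
  rw [← hM.card_filter_fst_mem sdiff_subset, ← card_filter_add_card_filter_not (fun p => p.2 ∈ S)]
  exact add_le_add hhit hmiss

end IsExpansion

end SimpleGraph

theorem Finset.card_sdiff_union_add_card_le {V : Type*} [DecidableEq V] {S X Y : Finset V}
    (hXY : Disjoint X Y) (h : (X \ S).card ≤ (S ∩ Y).card) :
    (S \ (X ∪ Y)).card + X.card ≤ S.card := by
  have hsplit : (S ∩ (X ∪ Y)).card = (S ∩ X).card + (S ∩ Y).card := by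
    rw [inter_union_distrib_left]
    exact card_union_of_disjoint (hXY.mono inter_subset_right inter_subset_right)
  have hX := card_inter_add_card_sdiff X S
  rw [inter_comm] at hX
  have hS := card_sdiff_add_card_inter S (X ∪ Y)
  omega

/-- Safeness of removing an `(ℓ+1)`-expansion `M` of `X` into `Y` (where `N(Y) ⊆ X`):
`G` has a set `S` of at most `k` vertices whose deletion leaves at most `ℓ` edges
iff `G - (X ∪ Y)` has such a set `S'` of at most `k - |X|` vertices. -/
theorem expansion_rule_safe {V : Type*} [Fintype V] [DecidableEq V]
    (G : SimpleGraph V) (k ℓ : ℕ) (X Y : Finset V) (hXY : Disjoint X Y)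
    (hNY : ∀ y ∈ Y, ∀ v : V, G.Adj y v → v ∈ X)
    (M : Finset (V × V))
    (hM : ∀ p ∈ M, p.1 ∈ X ∧ p.2 ∈ Y ∧ G.Adj p.1 p.2)
    (hMX : ∀ x ∈ X, (M.filter (fun p => p.1 = x)).card = ℓ + 1)
    (hMY : ∀ y ∈ Y, (M.filter (fun p => p.2 = y)).card ≤ 1) :
    (∃ S : Finset V, S.card ≤ k ∧ (G.delVerts ↑S).edgeSet.ncard ≤ ℓ) ↔
    (∃ S' : Finset V, Disjoint S' (X ∪ Y) ∧ (S'.card : ℤ) ≤ (k : ℤ) - X.card ∧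
      ((G.delVerts ↑(X ∪ Y)).delVerts ↑S').edgeSet.ncard ≤ ℓ) := by
  have hexp : G.IsExpansion (ℓ + 1) X Y M := ⟨hM, hMX, hMY⟩
  constructor
  · rintro ⟨S, hSk, hSe⟩
    have hcover : (X \ S).card ≤ (S ∩ Y).card := by
      have := hexp.card_sdiff_mul_le hXY S
      nlinarith
    have hcard := card_sdiff_union_add_card_le hXY hcover
    refine ⟨S \ (X ∪ Y), sdiff_disjoint, by omega, ?_⟩
    rw [SimpleGraph.delVerts_delVerts]
    refine (SimpleGraph.ncard_edgeSet_mono (G.delVerts_anti ?_)).trans hSe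
    rw [coe_sdiff, Set.union_sdiff_self]
    exact Set.subset_union_right
  · rintro ⟨S', hd, hcard, hSe⟩
    have hXS' : Disjoint X S' := (disjoint_union_left.mp hd.symm).1
    refine ⟨X ∪ S', by rw [card_union_of_disjoint hXS']; omega, ?_⟩
    have hdel : G.delVerts ↑(X ∪ S') = (G.delVerts ↑(X ∪ Y)).delVerts ↑S' := by
      rw [SimpleGraph.delVerts_delVerts, ← G.delVerts_union_eq_of_adj_mem (Y := ↑Y)
        fun y hy v hv => by simp [hNY y hy v hv]]
      congr 1
      push_cast
      exact Set.union_right_comm _ _ _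
    rwa [hdel]
end

section
/- (Additive expansion lemma) Let q be a positive integer and let H be a finite bipartite graph with bipartition (A, B) such that |B| > q·|A| and no vertex of B is isolated. Then there exist non-empty vertex sets X ⊆ A and Y ⊆ B such that the bipartite subgraph of H induced between X and Y is a q-additive expansion of X into Y, and no vertex in Y has a neighbor outside X, i.e., N(Y) ⊆ X. -/
/-- Additive expansion lemma: if `H` is a finite bipartite graph with bipartition `(A, B)`
(adjacency given by `R`) with `|B| > q·|A|` and no isolated vertex in `B`, then there are
non-empty sets `X ⊆ A` and `Y ⊆ B` such that the subgraph induced between `X` and `Y` is a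
`q`-additive expansion of `X` into `Y` (for every `Y' ⊆ Y` with `|Y'| = q` there is a
matching between `X` and `Y \ Y'` saturating `X`) and no vertex of `Y` has a neighbor
outside `X`. -/
theorem additive_expansion_lemma {A B : Type*} [Fintype A] [Fintype B]
    (R : A → B → Prop) (q : ℕ) (hq : 0 < q)
    (hsize : q * Fintype.card A < Fintype.card B)
    (hnoiso : ∀ b : B, ∃ a : A, R a b) :
    ∃ (X : Finset A) (Y : Finset B), X.Nonempty ∧ Y.Nonempty ∧
      (∀ Y' ⊆ Y, Y'.card = q →
        ∃ f : A → B, Set.InjOn f ↑X ∧ ∀ a ∈ X, R a (f a) ∧ f a ∈ Y ∧ f a ∉ Y') ∧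
      (∀ (a : A), ∀ b ∈ Y, R a b → a ∈ X) := by
  classical
  let YX : Finset A → Finset B := fun X =>
    Finset.univ.filter (fun b => ∀ a, R a b → a ∈ X)
  let T : Finset (Finset A) := Finset.univ.filter (fun X => q * X.card < (YX X).card)
  have hTuniv : (Finset.univ : Finset A) ∈ T := by
    simp only [T, Finset.mem_filter, Finset.mem_univ, true_and]
    have h1 : YX Finset.univ = Finset.univ := by simp [YX]
    rw [h1]
    simpa [Finset.card_univ] using hsize
  obtain ⟨X, hXT, hXmin⟩ := T.exists_min_image Finset.card ⟨_, hTuniv⟩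
  have hPX : q * X.card < (YX X).card := (Finset.mem_filter.mp hXT).2
  set Y := YX X with hY
  have hYmem : ∀ b, b ∈ Y ↔ ∀ a, R a b → a ∈ X := by
    intro b; simp [hY, YX]
  have hXne : X.Nonempty := by
    rcases X.eq_empty_or_nonempty with h | h
    · exfalso
      have hYe : Y = ∅ := by
        ext b
        simp only [Finset.notMem_empty, iff_false, hYmem]
        intro hb
        obtain ⟨a, ha⟩ := hnoiso b
        exact absurd (hb a ha) (by simp [h])
      rw [h, hYe] at hPX
      simp at hPX
    · exact h
  have hYne : Y.Nonempty := by
    rw [← Finset.card_pos]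
    calc 0 < q * X.card := Nat.mul_pos hq (Finset.card_pos.mpr hXne)
    _ < Y.card := hPX
  -- key Hall-type bound: every nonempty S ⊆ X has at least |S| + q neighbours in Y
  have key : ∀ S ⊆ X, S.Nonempty →
      S.card + q ≤ (Y.filter (fun b => ∃ a ∈ S, R a b)).card := by
    intro S hSX hSne
    by_contra hlt
    push_neg at hlt
    set N := Y.filter (fun b => ∃ a ∈ S, R a b) with hN
    have hNY : N ⊆ Y := Finset.filter_subset _ _
    have hsub : Y \ N ⊆ YX (X \ S) := by
      intro b hb
      rw [Finset.mem_sdiff] at hb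
      obtain ⟨hbY, hbN⟩ := hb
      simp only [YX, Finset.mem_filter, Finset.mem_univ, true_and]
      intro a hab
      rw [Finset.mem_sdiff]
      refine ⟨(hYmem b).mp hbY a hab, fun haS => hbN ?_⟩
      rw [hN, Finset.mem_filter]
      exact ⟨hbY, a, haS, hab⟩
    have hcard1 : Y.card - N.card ≤ (YX (X \ S)).card := by
      calc Y.card - N.card = (Y \ N).card := (Finset.card_sdiff_of_subset hNY).symm
      _ ≤ _ := Finset.card_le_card hsub
    have hX'card : (X \ S).card = X.card - S.card := Finset.card_sdiff_of_subset hSX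
    have hPX' : q * (X \ S).card < (YX (X \ S)).card := by
      have h1 : q * (X \ S).card = q * X.card - q * S.card := by
        rw [hX'card, Nat.mul_sub]
      have hs : 1 ≤ S.card := hSne.card_pos
      have h2 : S.card + q ≤ q * S.card + 1 := by nlinarith
      have h3 : S.card ≤ X.card := Finset.card_le_card hSX
      have h4 : q * S.card ≤ q * X.card := Nat.mul_le_mul_left q h3
      have h5 : N.card ≤ Y.card := Finset.card_le_card hNY
      omega
    have hX'T : X \ S ∈ T := Finset.mem_filter.mpr ⟨Finset.mem_univ _, hPX'⟩
    have hge := hXmin _ hX'T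
    have hltc : (X \ S).card < X.card := by
      have := hSne.card_pos
      have := Finset.card_le_card hSX
      omega
    omega
  refine ⟨X, Y, hXne, hYne, ?_, ?_⟩
  · intro Y' hY'Y hY'card
    have hall : ∀ s : Finset ↥X,
        s.card ≤ (s.biUnion (fun x => (Y \ Y').filter (fun b => R x.1 b))).card := by
      intro s
      rcases s.eq_empty_or_nonempty with h | h
      · simp [h]
      · set S := s.image (fun x : ↥X => x.1) with hS
        have hScard : S.card = s.card :=
          Finset.card_image_of_injective _ Subtype.val_injective
        have hSX : S ⊆ X := by
          intro a ha
          simp only [hS, Finset.mem_image] at ha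
          obtain ⟨x, _, rfl⟩ := ha
          exact x.2
        have hSne : S.Nonempty := h.image _
        have hkey := key S hSX hSne
        set N := Y.filter (fun b => ∃ a ∈ S, R a b) with hN
        have hsub : N \ Y' ⊆ s.biUnion (fun x => (Y \ Y').filter (fun b => R x.1 b)) := by
          intro b hb
          rw [Finset.mem_sdiff] at hb
          obtain ⟨hbN, hbY'⟩ := hb
          rw [hN, Finset.mem_filter] at hbN
          obtain ⟨hbY, a, haS, hab⟩ := hbN
          rw [hS, Finset.mem_image] at haS
          obtain ⟨x, hxs, rfl⟩ := haS
          exact Finset.mem_biUnion.mpr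
            ⟨x, hxs, Finset.mem_filter.mpr ⟨Finset.mem_sdiff.mpr ⟨hbY, hbY'⟩, hab⟩⟩
        have h1 : N.card ≤ (N \ Y').card + Y'.card := Finset.card_le_card_sdiff_add_card
        have h2 := Finset.card_le_card hsub
        omega
    obtain ⟨f', hf'inj, hf'mem⟩ :=
      (Finset.all_card_le_biUnion_card_iff_exists_injective _).mp hall
    obtain ⟨a0, ha0⟩ := hXne
    refine ⟨fun a => if h : a ∈ X then f' ⟨a, h⟩ else f' ⟨a0, ha0⟩, ?_, ?_⟩
    · intro a ha b hb hab
      simp only [Finset.mem_coe] at ha hb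
      simp only [dif_pos ha, dif_pos hb] at hab
      exact Subtype.ext_iff.mp (hf'inj hab)
    · intro a ha
      simp only [dif_pos ha]
      have hm := hf'mem ⟨a, ha⟩
      rw [Finset.mem_filter, Finset.mem_sdiff] at hm
      exact ⟨hm.2, hm.1.1, hm.1.2⟩
  · intro a b hb hab
    exact (hYmem b).mp hb a hab
end
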